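/- The number of linear extensions of a finite poset is a comparability invariant: if two posets P and Q on the same finite ground set have isomorphic comparability graphs, then e(P) = e(Q). -/

import Mathlib

/-!
Stanley's transfer map between the order polytope and the chain polytope, on lattice points:
for a monotone `f : P → {0, …, m}`, the weighting `v ↦ f v - max_{u < v} f u` has sum at most `m`
along every chain, and taking the maximal chain sum below each point inverts it. So the number
`Ω(P, m + 1)` of monotone maps `P → Fin (m + 1)` depends only on the comparability graph.
Grouping monotone maps by their image gives `Ω(P, m) = ∑ₖ (m choose k) Tₖ`, where `Tₖ` counts
monotone surjections onto `Fin k`; this binomial transform is invertible, and `T_{|P|} = e(P)`.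
-/

/-- The number of linear extensions of a partial order `P` on a finite type `V`. -/
noncomputable def eCount (V : Type*) [Fintype V] (P : PartialOrder V) : ℕ :=
  Nat.card {f : V ≃ Fin (Fintype.card V) // ∀ a b, P.lt a b → f a < f b}

open Finset Function

theorem IsChain.exists_isGreatest {α : Type*} [Preorder α] {s : Set α}
    (hs : IsChain (· ≤ ·) s) (hfin : s.Finite) (hne : s.Nonempty) : ∃ v, IsGreatest s v := by
  obtain ⟨v, hv⟩ := hfin.exists_maximal hne
  refine ⟨v, hv.1, fun u hu => ?_⟩
  rcases eq_or_ne u v with rfl | huv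
  · exact le_rfl
  · exact (hs hu hv.1 huv).elim id (hv.2 hu)

theorem eq_of_sum_choose_mul_eq {T₁ T₂ : ℕ → ℕ}
    (h : ∀ m, ∑ k ∈ range (m + 1), m.choose k * T₁ k = ∑ k ∈ range (m + 1), m.choose k * T₂ k) :
    T₁ = T₂ := by
  funext m
  induction m using Nat.strong_induction_on with
  | _ m ih =>
    have hlower : ∑ k ∈ range m, m.choose k * T₁ k = ∑ k ∈ range m, m.choose k * T₂ k :=
      sum_congr rfl fun k hk => by rw [ih k (mem_range.1 hk)]
    have := h m
    rw [sum_range_succ, sum_range_succ, hlower, Nat.choose_self] at this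
    omega

section Transfer

variable {α : Type*} [PartialOrder α] [Fintype α]

open scoped Classical

noncomputable def predSup (f : α → ℕ) (v : α) : ℕ :=
  (univ.filter (· < v)).sup f

noncomputable def chainsBelow (v : α) : Finset (Finset α) :=
  univ.filter fun s => IsChain (· ≤ ·) (s : Set α) ∧ ∀ u ∈ s, u ≤ v

theorem mem_chainsBelow {s : Finset α} {v : α} :
    s ∈ chainsBelow v ↔ IsChain (· ≤ ·) (s : Set α) ∧ ∀ u ∈ s, u ≤ v := by
  simp [chainsBelow]

noncomputable def maxChainSum (g : α → ℕ) (v : α) : ℕ :=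
  (chainsBelow v).sup fun s => ∑ u ∈ s, g u

noncomputable def transfer (f : α → ℕ) (v : α) : ℕ :=
  f v - predSup f v

theorem le_predSup (f : α → ℕ) {u v : α} (h : u < v) : f u ≤ predSup f v :=
  Finset.le_sup (by simpa using h)

theorem predSup_le {f : α → ℕ} {v : α} {c : ℕ} (h : ∀ u < v, f u ≤ c) : predSup f v ≤ c :=
  Finset.sup_le fun u hu => h u (by simpa using hu)

theorem Monotone.predSup_le {f : α → ℕ} (hf : Monotone f) (v : α) : predSup f v ≤ f v :=
  _root_.predSup_le fun _ hu => hf hu.le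

theorem sum_le_maxChainSum (g : α → ℕ) {s : Finset α} {v : α}
    (hs : IsChain (· ≤ ·) (s : Set α)) (hv : ∀ u ∈ s, u ≤ v) :
    ∑ u ∈ s, g u ≤ maxChainSum g v :=
  Finset.le_sup (f := fun s => ∑ u ∈ s, g u) (mem_chainsBelow.2 ⟨hs, hv⟩)

theorem exists_sum_eq_maxChainSum (g : α → ℕ) (v : α) :
    ∃ s : Finset α, IsChain (· ≤ ·) (s : Set α) ∧ (∀ u ∈ s, u ≤ v) ∧
      maxChainSum g v = ∑ u ∈ s, g u := by
  obtain ⟨s, hs, heq⟩ := (chainsBelow v).exists_mem_eq_sup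
    ⟨∅, mem_chainsBelow.2 ⟨by simp, by simp⟩⟩ fun s => ∑ u ∈ s, g u
  exact ⟨s, (mem_chainsBelow.1 hs).1, (mem_chainsBelow.1 hs).2, heq⟩

theorem maxChainSum_le {g : α → ℕ} {m : ℕ}
    (hg : ∀ s : Finset α, IsChain (· ≤ ·) (s : Set α) → ∑ u ∈ s, g u ≤ m) (v : α) :
    maxChainSum g v ≤ m :=
  Finset.sup_le fun s hs => hg s (mem_chainsBelow.1 hs).1

theorem maxChainSum_mono (g : α → ℕ) : Monotone (maxChainSum g) := fun _ _ hvw =>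
  Finset.sup_mono fun s hs => by
    rw [mem_chainsBelow] at hs ⊢
    exact ⟨hs.1, fun u hu => (hs.2 u hu).trans hvw⟩

theorem sum_le_predSup_maxChainSum (g : α → ℕ) {t : Finset α} {v : α}
    (ht : IsChain (· ≤ ·) (t : Set α)) (hlt : ∀ u ∈ t, u < v) :
    ∑ u ∈ t, g u ≤ predSup (maxChainSum g) v := by
  rcases t.eq_empty_or_nonempty with rfl | hne
  · simp
  obtain ⟨w, hwt, hw⟩ := ht.exists_isGreatest t.finite_toSet hne
  calc ∑ u ∈ t, g u ≤ maxChainSum g w := sum_le_maxChainSum g ht fun u hu => hw hu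
    _ ≤ predSup (maxChainSum g) v := le_predSup _ (hlt w hwt)

theorem add_maxChainSum_le (g : α → ℕ) {u v : α} (huv : u < v) :
    g v + maxChainSum g u ≤ maxChainSum g v := by
  obtain ⟨s, hs, hsu, heq⟩ := exists_sum_eq_maxChainSum g u
  have hvs : v ∉ s := fun hv => (hsu v hv).not_gt huv
  have hsv : ∀ w ∈ s, w ≤ v := fun w hw => (hsu w hw).trans huv.le
  have hchain : IsChain (· ≤ ·) ((insert v s : Finset α) : Set α) := by
    rw [coe_insert]
    exact hs.insert fun w hw _ => Or.inr (hsv w hw)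
  have := sum_le_maxChainSum g (v := v) hchain fun w hw =>
    (mem_insert.1 hw).elim (fun h => h ▸ le_rfl) (hsv w)
  rwa [sum_insert hvs, ← heq] at this

theorem maxChainSum_eq_add_predSup (g : α → ℕ) (v : α) :
    maxChainSum g v = g v + predSup (maxChainSum g) v := by
  apply le_antisymm
  · obtain ⟨s, hs, hsv, heq⟩ := exists_sum_eq_maxChainSum g v
    have hsub : s ⊆ insert v (s.filter (· < v)) := fun u hu => by
      rcases (hsv u hu).eq_or_lt with rfl | hlt
      · exact mem_insert_self _ _
      · exact mem_insert_of_mem (mem_filter.2 ⟨hu, hlt⟩)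
    calc maxChainSum g v = ∑ u ∈ s, g u := heq
      _ ≤ ∑ u ∈ insert v (s.filter (· < v)), g u := sum_le_sum_of_subset hsub
      _ = g v + ∑ u ∈ s.filter (· < v), g u := sum_insert (by simp)
      _ ≤ g v + predSup (maxChainSum g) v := by
        gcongr
        exact sum_le_predSup_maxChainSum g (hs.mono (coe_subset.2 (filter_subset _ _)))
          fun u hu => (mem_filter.1 hu).2
  · have hv : g v ≤ maxChainSum g v := by
      simpa using sum_le_maxChainSum g (s := {v}) (by simp) (by simp)
    have : predSup (maxChainSum g) v ≤ maxChainSum g v - g v :=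
      predSup_le fun u hu => by have := add_maxChainSum_le g hu; omega
    omega

theorem transfer_maxChainSum (g : α → ℕ) : transfer (maxChainSum g) = g := funext fun v => by
  have := maxChainSum_eq_add_predSup g v
  unfold transfer
  omega

theorem maxChainSum_transfer {f : α → ℕ} (hf : Monotone f) : maxChainSum (transfer f) = f := by
  funext v
  induction v using WellFoundedLT.induction with
  | _ v ih =>
    have hpred : predSup (maxChainSum (transfer f)) v = predSup f v :=
      Finset.sup_congr rfl fun u hu => ih u (by simpa using hu)
    have := hf.predSup_le v
    rw [maxChainSum_eq_add_predSup, hpred, transfer]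
    omega

theorem sum_transfer_le {f : α → ℕ} {m : ℕ} (hf : Monotone f) (hm : ∀ v, f v ≤ m)
    {s : Finset α} (hs : IsChain (· ≤ ·) (s : Set α)) : ∑ u ∈ s, transfer f u ≤ m := by
  rcases s.eq_empty_or_nonempty with rfl | hne
  · simp
  obtain ⟨v, -, hv⟩ := hs.exists_isGreatest s.finite_toSet hne
  calc ∑ u ∈ s, transfer f u ≤ maxChainSum (transfer f) v :=
        sum_le_maxChainSum _ hs fun u hu => hv hu
    _ = f v := by rw [maxChainSum_transfer hf]
    _ ≤ m := hm v

noncomputable def transferEquiv (m : ℕ) :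
    {f : α → ℕ // Monotone f ∧ ∀ v, f v ≤ m} ≃
      {g : α → ℕ // ∀ s : Finset α, IsChain (· ≤ ·) (s : Set α) → ∑ u ∈ s, g u ≤ m} where
  toFun f := ⟨transfer f.1, fun _ hs => sum_transfer_le f.2.1 f.2.2 hs⟩
  invFun g := ⟨maxChainSum g.1, maxChainSum_mono g.1, maxChainSum_le g.2⟩
  left_inv f := Subtype.ext (maxChainSum_transfer f.2.1)
  right_inv g := Subtype.ext (transfer_maxChainSum g.1)

end Transfer

section Counting

variable (α : Type*) [Preorder α]

noncomputable def surjectiveMonotoneCount (k : ℕ) : ℕ :=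
  Nat.card {f : α → Fin k // Monotone f ∧ Surjective f}

variable {α}

theorem OrderIso.card_monotone_surjective_eq {γ δ : Type*} [Preorder γ] [Preorder δ]
    (e : γ ≃o δ) :
    Nat.card {f : α → γ // Monotone f ∧ Surjective f} =
      Nat.card {f : α → δ // Monotone f ∧ Surjective f} :=
  Nat.card_congr <| (Equiv.refl α).arrowCongr e.toEquiv |>.subtypeEquiv fun f => by
    refine and_congr ⟨fun hf => e.monotone.comp hf, fun hf _ _ hab => e.le_iff_le.1 (hf hab)⟩ ?_
    exact (EquivLike.comp_surjective f e).symm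

variable {β : Type*} [LinearOrder β]

noncomputable def monotoneImageEquiv [Fintype α] (s : Finset β) :
    {f : α → β // Monotone f ∧ univ.image f = s} ≃ {g : α → s // Monotone g ∧ Surjective g} where
  toFun f := ⟨fun a => ⟨f.1 a, f.2.2.subset (mem_image_of_mem f.1 (mem_univ a))⟩,
    fun _ _ h => f.2.1 h, fun y => by
      obtain ⟨a, -, ha⟩ := mem_image.1 (f.2.2.symm.subset y.2)
      exact ⟨a, Subtype.ext ha⟩⟩
  invFun g := ⟨fun a => g.1 a, fun _ _ h => g.2.1 h, by
    ext y
    simp only [mem_image, mem_univ, true_and]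
    exact ⟨fun ⟨a, ha⟩ => ha ▸ (g.1 a).2, fun hy => (g.2.2 ⟨y, hy⟩).imp fun a ha => by rw [ha]⟩⟩
  left_inv _ := rfl
  right_inv _ := rfl

theorem card_monotone_eq_sum_choose [Fintype α] [Fintype β] :
    Nat.card {f : α → β // Monotone f} =
      ∑ k ∈ range (Fintype.card β + 1),
        (Fintype.card β).choose k * surjectiveMonotoneCount α k := by
  classical
  let e : {f : α → β // Monotone f} ≃
      Σ s : Finset β, {f : α → β // Monotone f ∧ univ.image f = s} :=
    { toFun f := ⟨univ.image f.1, f.1, f.2, rfl⟩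
      invFun p := ⟨p.2.1, p.2.2.1⟩
      left_inv _ := rfl
      right_inv := by rintro ⟨_, f, hf, rfl⟩; rfl }
  have hfiber (s : Finset β) :
      Nat.card {f : α → β // Monotone f ∧ univ.image f = s} = surjectiveMonotoneCount α s.card :=
    (Nat.card_congr (monotoneImageEquiv s)).trans
      (s.orderIsoOfFin rfl).card_monotone_surjective_eq.symm
  rw [Nat.card_congr e, Nat.card_sigma, Fintype.sum_congr _ _ hfiber, ← powerset_univ,
    sum_powerset_apply_card, card_univ]
  rfl

theorem card_monotone_fin_succ (m : ℕ) :
    Nat.card {f : α → Fin (m + 1) // Monotone f} =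
      Nat.card {f : α → ℕ // Monotone f ∧ ∀ v, f v ≤ m} :=
  Nat.card_congr
    { toFun f := ⟨fun v => f.1 v, fun _ _ h => f.2 h, fun v => Fin.is_le (f.1 v)⟩
      invFun f := ⟨fun v => ⟨f.1 v, Nat.lt_succ_of_le (f.2.2 v)⟩, fun _ _ h => f.2.1 h⟩
      left_inv _ := rfl
      right_inv _ := rfl }

end Counting

theorem eCount_eq_surjectiveMonotoneCount {α : Type*} [PartialOrder α] [Fintype α] :
    eCount α ‹_› = surjectiveMonotoneCount α (Fintype.card α) := by
  have hbij {f : α → Fin (Fintype.card α)} (hf : Surjective f) : Bijective f :=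
    (Fintype.bijective_iff_surjective_and_card f).2 ⟨hf, by simp⟩
  exact Nat.card_congr
    { toFun e := ⟨e.1, StrictMono.monotone fun _ _ h => e.2 _ _ h, e.1.surjective⟩
      invFun f := ⟨Equiv.ofBijective f.1 (hbij f.2.2),
        fun _ _ h => (f.2.1.strictMono_of_injective (hbij f.2.2).1) h⟩
      left_inv _ := Subtype.ext (Equiv.ext fun _ => rfl)
      right_inv _ := rfl }

namespace SimpleGraph

variable {V W : Type*} {G : SimpleGraph V} {H : SimpleGraph W}

def cliqueBoundedWeights (G : SimpleGraph V) (m : ℕ) : Set (V → ℕ) :=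
  {g | ∀ s : Finset V, G.IsClique (s : Set V) → ∑ v ∈ s, g v ≤ m}

theorem Iso.isClique_finsetMap (e : G ≃g H) {s : Finset V} (hs : G.IsClique (s : Set V)) :
    H.IsClique (s.map e.toEquiv.toEmbedding : Set W) := by
  rintro _ hx _ hy hxy
  obtain ⟨a, ha, rfl⟩ := mem_map.1 hx
  obtain ⟨b, hb, rfl⟩ := mem_map.1 hy
  exact e.map_adj_iff.2 (hs ha hb fun hab => hxy (hab ▸ rfl))

theorem Iso.comp_mem_cliqueBoundedWeights (e : G ≃g H) {g : W → ℕ} {m : ℕ}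
    (hg : g ∈ H.cliqueBoundedWeights m) : g ∘ e ∈ G.cliqueBoundedWeights m := fun s hs => by
  simpa using hg _ (Iso.isClique_finsetMap e hs)

theorem Iso.card_cliqueBoundedWeights (e : G ≃g H) (m : ℕ) :
    Nat.card (G.cliqueBoundedWeights m) = Nat.card (H.cliqueBoundedWeights m) :=
  Nat.card_congr
    { toFun g := ⟨g.1 ∘ e.symm, Iso.comp_mem_cliqueBoundedWeights e.symm g.2⟩
      invFun g := ⟨g.1 ∘ e, Iso.comp_mem_cliqueBoundedWeights e g.2⟩
      left_inv g := Subtype.ext (funext fun v => by simp)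
      right_inv g := Subtype.ext (funext fun w => by simp) }

end SimpleGraph

def comparabilityGraph (α : Type*) [Preorder α] : SimpleGraph α :=
  SimpleGraph.fromRel (· ≤ ·)

theorem isClique_comparabilityGraph_iff {α : Type*} [Preorder α] {s : Set α} :
    (comparabilityGraph α).IsClique s ↔ IsChain (· ≤ ·) s :=
  ⟨fun h _ hx _ hy hxy => (h hx hy hxy).2, fun h _ hx _ hy hxy => ⟨hxy, h hx hy hxy⟩⟩

theorem card_monotone_fin_succ_eq_card_cliqueBoundedWeights {α : Type*} [PartialOrder α]
    [Fintype α] (m : ℕ) :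
    Nat.card {f : α → Fin (m + 1) // Monotone f} =
      Nat.card ((comparabilityGraph α).cliqueBoundedWeights m) := by
  rw [card_monotone_fin_succ, Nat.card_congr (transferEquiv m)]
  exact Nat.card_congr <| Equiv.subtypeEquivRight fun g => by
    simp [SimpleGraph.cliqueBoundedWeights, isClique_comparabilityGraph_iff]

theorem card_monotone_fin_eq_of_comparabilityGraph_iso {α β : Type*} [PartialOrder α] [Fintype α]
    [PartialOrder β] [Fintype β] (e : comparabilityGraph α ≃g comparabilityGraph β) (m : ℕ) :
    Nat.card {f : α → Fin m // Monotone f} = Nat.card {f : β → Fin m // Monotone f} := by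
  cases m with
  | zero =>
    exact Nat.card_congr <| (e.toEquiv.arrowCongr (Equiv.refl _)).subtypeEquiv fun f =>
      iff_of_true (fun a => (f a).elim0) (fun b => (f (e.symm b)).elim0)
  | succ m =>
    rw [card_monotone_fin_succ_eq_card_cliqueBoundedWeights,
      card_monotone_fin_succ_eq_card_cliqueBoundedWeights]
    exact SimpleGraph.Iso.card_cliqueBoundedWeights e m

theorem eCount_eq_of_comparabilityGraph_iso {α β : Type*} [PartialOrder α] [Fintype α]
    [PartialOrder β] [Fintype β] (e : comparabilityGraph α ≃g comparabilityGraph β) :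
    eCount α ‹_› = eCount β ‹_› := by
  have hT : surjectiveMonotoneCount α = surjectiveMonotoneCount β :=
    eq_of_sum_choose_mul_eq fun m => by
      simpa only [card_monotone_eq_sum_choose, Fintype.card_fin] using
        card_monotone_fin_eq_of_comparabilityGraph_iso e m
  rw [eCount_eq_surjectiveMonotoneCount, eCount_eq_surjectiveMonotoneCount, hT,
    Fintype.card_congr e.toEquiv]

theorem stmt_7 {V : Type*} [Fintype V] (P Q : PartialOrder V) (σ : V ≃ V)
    (hiso : ∀ u v, (P.le u v ∨ P.le v u) ↔ (Q.le (σ u) (σ v) ∨ Q.le (σ v) (σ u))) :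
    eCount V P = eCount V Q :=
  @eCount_eq_of_comparabilityGraph_iso V V P _ Q _ ⟨σ, fun {u v} => by
    simp [comparabilityGraph, σ.injective.ne_iff, hiso]⟩
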